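/- Let n ≥ 3. There exists a constant C = C(n) > 0 such that for every measurable V : ℝⁿ → ℂ with ‖V‖_{L^{n/2,∞}(ℝⁿ)} < ∞ and every u ∈ C_c^∞(ℝⁿ;ℂ): ∫_{ℝⁿ} |V(x)| |u(x)|² dx ≤ C ‖V‖_{L^{n/2,∞}(ℝⁿ)} ∫_{ℝⁿ} |∇u(x)|² dx. (Form bound of weak-L^{n/2} potentials by the Dirichlet energy, via Hölder in Lorentz spaces and the Lorentz-refined Sobolev inequality.) -/

import Mathlib

open MeasureTheory Metric Set ENNReal

noncomputable section

/-- Lorentz quasinorm of a nonnegative (ℝ≥0∞-valued) "absolute value" function: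
`‖f‖_{L^{p,s}} = p^{1/s} (∫_0^∞ (α μ{f>α}^{1/p})^s dα/α)^{1/s}` for finite `s`, and
`sup_{α>0} α μ{f>α}^{1/p}` for `s = ∞`. -/
def eLorentz {X : Type*} [MeasurableSpace X] (μ : Measure X)
    (p : ℝ) (s : ℝ≥0∞) (f : X → ℝ≥0∞) : ℝ≥0∞ :=
  if s = ∞ then ⨆ (α : ℝ) (_ : 0 < α), ENNReal.ofReal α * μ {x | ENNReal.ofReal α < f x} ^ (1 / p)
  else ENNReal.ofReal p ^ (1 / s.toReal) *
    (∫⁻ α in Set.Ioi (0 : ℝ),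
      (ENNReal.ofReal α * μ {x | ENNReal.ofReal α < f x} ^ (1 / p)) ^ s.toReal /
        ENNReal.ofReal α) ^ (1 / s.toReal)

/-- Lorentz quasinorm of a complex-valued function. -/
def lorentzNorm {X : Type*} [MeasurableSpace X] (μ : Measure X)
    (p : ℝ) (s : ℝ≥0∞) (f : X → ℂ) : ℝ≥0∞ :=
  eLorentz μ p s fun x => ENNReal.ofReal ‖f x‖

/-- The measure `r^{n-1} dr` on `(0,∞)`. -/
def radialMeasure (n : ℕ) : Measure ℝ :=
  ((volume : Measure ℝ).restrict (Set.Ioi 0)).withDensity fun r => ENNReal.ofReal (r ^ (n - 1))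

/-- `g_f(r) = (∫_{S^{n-1}} |f(rω)|² dσ(ω))^{1/2}`, with `σ` the surface measure on the
unit sphere. -/
def sphereL2 (n : ℕ) (f : EuclideanSpace ℝ (Fin n) → ℂ) (r : ℝ) : ℝ :=
  (∫ ω : sphere (0 : EuclideanSpace ℝ (Fin n)) 1,
      ‖f (r • (ω : EuclideanSpace ℝ (Fin n)))‖ ^ 2
      ∂((volume : Measure (EuclideanSpace ℝ (Fin n))).toSphere)) ^ (1 / 2 : ℝ)

/-- The mixed radial-angular Lorentz norm `‖f‖_{L^{p,s}_r L²_ω(ℝⁿ)}`. -/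
def mixedLorentzNorm (n : ℕ) (p : ℝ) (s : ℝ≥0∞) (f : EuclideanSpace ℝ (Fin n) → ℂ) : ℝ≥0∞ :=
  eLorentz (radialMeasure n) p s fun r => ENNReal.ofReal (sphereL2 n f r)

/-- The (negative of the) Laplacian, written via iterated directional derivatives. -/
def laplacian {n : ℕ} (u : EuclideanSpace ℝ (Fin n) → ℂ) (x : EuclideanSpace ℝ (Fin n)) : ℂ :=
  ∑ i : Fin n, fderiv ℝ (fun y => fderiv ℝ u y (EuclideanSpace.single i 1)) x
    (EuclideanSpace.single i 1)

/-- `|∇u(x)|² = ∑ i |∂_i u(x)|²`. -/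
def gradSq {n : ℕ} (u : EuclideanSpace ℝ (Fin n) → ℂ) (x : EuclideanSpace ℝ (Fin n)) : ℝ :=
  ∑ i : Fin n, ‖fderiv ℝ u x (EuclideanSpace.single i 1)‖ ^ 2

/-- The radial derivative `x·∇u = ∑ i x_i ∂_i u`. -/
def radialDeriv {n : ℕ} (u : EuclideanSpace ℝ (Fin n) → ℂ) (x : EuclideanSpace ℝ (Fin n)) : ℂ :=
  ∑ i : Fin n, (x i : ℂ) * fderiv ℝ u x (EuclideanSpace.single i 1)

/-- The critical Hardy constant `C_H = (n-2)²/4`. -/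
def hardyConst (n : ℕ) : ℝ := ((n : ℝ) - 2) ^ 2 / 4

/-- The Schrödinger operator `H₀u = -Δu - C_H |x|^{-2} u` with critical inverse-square
potential, applied to a test function. -/
def H₀ {n : ℕ} (u : EuclideanSpace ℝ (Fin n) → ℂ) (x : EuclideanSpace ℝ (Fin n)) : ℂ :=
  -laplacian u x - ((hardyConst n / ‖x‖ ^ 2 : ℝ) : ℂ) * u x

/-- `z ∈ ℂ∖[0,∞)`. -/
def offHalfLine (z : ℂ) : Prop := ¬ (z.im = 0 ∧ 0 ≤ z.re)

/-- `d(z) = dist(z, [0,∞))`. -/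
def distHalfLine (z : ℂ) : ℝ := Metric.infDist z {w : ℂ | w.im = 0 ∧ 0 ≤ w.re}

/-- `u` has zero spherical means: `∫_{S^{n-1}} u(rω) dσ(ω) = 0` for all `r > 0`. -/
def ZeroSphericalMeans {n : ℕ} (u : EuclideanSpace ℝ (Fin n) → ℂ) : Prop :=
  ∀ r : ℝ, 0 < r →
    (∫ ω : sphere (0 : EuclideanSpace ℝ (Fin n)) 1,
      u (r • (ω : EuclideanSpace ℝ (Fin n)))
      ∂((volume : Measure (EuclideanSpace ℝ (Fin n))).toSphere)) = 0

/-- Assumption A with parameter `δ`. -/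
structure AssumptionA (n : ℕ) (δ : ℝ) (V : EuclideanSpace ℝ (Fin n) → ℝ) : Prop where
  contDiffOn : ContDiffOn ℝ 1 V {(0 : EuclideanSpace ℝ (Fin n))}ᶜ
  weakLn : eLorentz (volume : Measure (EuclideanSpace ℝ (Fin n))) n ∞
    (fun x => ENNReal.ofReal (‖x‖ * |V x|)) < ∞
  weakLhalf : eLorentz (volume : Measure (EuclideanSpace ℝ (Fin n))) ((n : ℝ) / 2) ∞
    (fun x => ENNReal.ofReal |∑ i : Fin n, x i * fderiv ℝ V x (EuclideanSpace.single i 1)|) < ∞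
  form₁ : ∀ u : EuclideanSpace ℝ (Fin n) → ℂ, ContDiff ℝ (⊤ : ℕ∞) u → HasCompactSupport u →
    δ * ∫ x, gradSq u x ≤ ∫ x, (gradSq u x + V x * ‖u x‖ ^ 2)
  form₂ : ∀ u : EuclideanSpace ℝ (Fin n) → ℂ, ContDiff ℝ (⊤ : ℕ∞) u → HasCompactSupport u →
    δ * ∫ x, gradSq u x ≤
      ∫ x, (gradSq u x -
        (V x + ∑ i : Fin n, x i * fderiv ℝ V x (EuclideanSpace.single i 1)) * ‖u x‖ ^ 2)


/-- `K_γ(z) = |z|^{min(γ,1/2)} d(z)^{max(γ-1/2,0)}`. -/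
noncomputable def Kgamma (γ : ℝ) (z : ℂ) : ℝ :=
  ‖z‖ ^ min γ (1 / 2 : ℝ) * distHalfLine z ^ max (γ - 1 / 2) 0

/-- `K^{rad}_{γ,ε}(z) = |z|^{min(γ, n/(n-1)-ε)} d(z)^{max(γ-n/(n-1)+ε,0)}`. -/
noncomputable def KgammaRad (n : ℕ) (γ ε : ℝ) (z : ℂ) : ℝ :=
  ‖z‖ ^ min γ ((n : ℝ) / ((n : ℝ) - 1) - ε) *
    distHalfLine z ^ max (γ - (n : ℝ) / ((n : ℝ) - 1) + ε) 0

end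


set_option synthInstance.maxHeartbeats 1000000
set_option maxHeartbeats 1000000

open MeasureTheory Metric Set ENNReal
open scoped NNReal

section AuxiliaryLemmas

/-- smooth cutoff: 0 for t ≤ 1, 1 for t ≥ 4 -/
noncomputable def psi (t : ℝ) : ℝ := Real.smoothTransition ((t - 1) / 3)

lemma psi_contDiff : ContDiff ℝ 1 psi :=
  (Real.smoothTransition.contDiff (n := 1)).comp
    (contDiff_id.sub contDiff_const |>.div_const 3)

lemma psi_nonneg (t : ℝ) : 0 ≤ psi t := Real.smoothTransition.nonneg _
lemma psi_le_one (t : ℝ) : psi t ≤ 1 := Real.smoothTransition.le_one _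

lemma psi_eq_zero {t : ℝ} (ht : t ≤ 1) : psi t = 0 :=
  Real.smoothTransition.zero_of_nonpos (by linarith)

lemma psi_eq_one {t : ℝ} (ht : 4 ≤ t) : psi t = 1 :=
  Real.smoothTransition.one_of_one_le (by linarith)

lemma deriv_psi_eq_zero_of_le {t : ℝ} (ht : t ≤ 1) : deriv psi t = 0 := by
  rcases lt_or_eq_of_le ht with h | h
  · have : psi =ᶠ[nhds t] fun _ => 0 := by
      filter_upwards [Iio_mem_nhds h] with s hs
      exact psi_eq_zero (le_of_lt hs)
    rw [this.deriv_eq]; simp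
  · subst h
    refine IsLocalMin.deriv_eq_zero ?_
    refine Filter.Eventually.of_forall fun s => ?_
    rw [psi_eq_zero le_rfl]
    exact psi_nonneg s

lemma deriv_psi_eq_zero_of_ge {t : ℝ} (ht : 4 ≤ t) : deriv psi t = 0 := by
  rcases lt_or_eq_of_le ht with h | h
  · have : psi =ᶠ[nhds t] fun _ => 1 := by
      filter_upwards [Ioi_mem_nhds h] with s hs
      exact psi_eq_one (le_of_lt hs)
    rw [this.deriv_eq]; simp
  · subst h
    refine IsLocalMax.deriv_eq_zero ?_
    refine Filter.Eventually.of_forall fun s => ?_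
    rw [psi_eq_one le_rfl]
    exact psi_le_one s

/-- a global bound for the derivative of psi -/
lemma psi_deriv_bound : ∃ L : ℝ, 1 ≤ L ∧ ∀ t : ℝ, |deriv psi t| ≤ L := by
  have hc : ContinuousOn (deriv psi) (Icc (0:ℝ) 5) :=
    (psi_contDiff.continuous_deriv le_rfl).continuousOn
  obtain ⟨C, hC⟩ := (isCompact_Icc : IsCompact (Icc (0:ℝ) 5)).exists_bound_of_continuousOn hc
  refine ⟨max C 1, le_max_right _ _, fun t => ?_⟩
  by_cases ht : t ∈ Icc (0:ℝ) 5
  · exact le_trans (hC t ht) (le_max_left _ _)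
  · simp only [mem_Icc, not_and_or, not_le] at ht
    rcases ht with h | h
    · rw [deriv_psi_eq_zero_of_le (by linarith)]
      simp
    · rw [deriv_psi_eq_zero_of_ge (by linarith)]
      simp


lemma opnorm_sq_le (n : ℕ) (T : EuclideanSpace ℝ (Fin n) →L[ℝ] ℂ) :
    ‖T‖ ^ 2 ≤ ∑ i : Fin n, ‖T (EuclideanSpace.single i 1)‖ ^ 2 := by
  set S : ℝ := ∑ i : Fin n, ‖T (EuclideanSpace.single i 1)‖ ^ 2 with hS
  have hS0 : 0 ≤ S := Finset.sum_nonneg fun i _ => sq_nonneg _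
  have hbound : ‖T‖ ≤ Real.sqrt S := by
    refine T.opNorm_le_bound (Real.sqrt_nonneg S) fun x => ?_
    have hx : ∑ i : Fin n, x i • EuclideanSpace.single i 1 = x := by
      have := (EuclideanSpace.basisFun (Fin n) ℝ).sum_repr x
      simpa [EuclideanSpace.basisFun_apply, EuclideanSpace.basisFun_repr] using this
    have hTx : T x = ∑ i : Fin n, x i • T (EuclideanSpace.single i 1) := by
      conv_lhs => rw [← hx]
      rw [map_sum]
      exact Finset.sum_congr rfl fun i _ => T.map_smul _ _
    have hsum0 : 0 ≤ ∑ i : Fin n, |x i| * ‖T (EuclideanSpace.single i 1)‖ :=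
      Finset.sum_nonneg fun i _ => mul_nonneg (abs_nonneg _) (norm_nonneg _)
    calc ‖T x‖ = ‖∑ i : Fin n, x i • T (EuclideanSpace.single i 1)‖ := by rw [hTx]
      _ ≤ ∑ i : Fin n, ‖x i • T (EuclideanSpace.single i 1)‖ := norm_sum_le _ _
      _ = ∑ i : Fin n, |x i| * ‖T (EuclideanSpace.single i 1)‖ := by
          simp [norm_smul, Real.norm_eq_abs]
      _ ≤ Real.sqrt (∑ i : Fin n, |x i| ^ 2) * Real.sqrt S := by
          rw [← Real.sqrt_mul (Finset.sum_nonneg fun i _ => sq_nonneg _)]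
          refine (Real.le_sqrt hsum0 (mul_nonneg (Finset.sum_nonneg fun i _ => sq_nonneg _) hS0)).mpr ?_
          exact Finset.sum_mul_sq_le_sq_mul_sq _ _ _
      _ = Real.sqrt S * ‖x‖ := by
          rw [mul_comm]
          congr 1
          rw [EuclideanSpace.norm_eq]
          congr 1
  calc ‖T‖ ^ 2 ≤ Real.sqrt S ^ 2 := by
        exact pow_le_pow_left₀ (norm_nonneg _) hbound 2
    _ = S := Real.sq_sqrt hS0

lemma measurable_rpow_neg_const (q : ℝ) : Measurable fun t : ℝ => t ^ (-q) := by
  measurability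

lemma lemA {X : Type*} [MeasurableSpace X] (μ : Measure X) (q : ℝ) (hq : 3/2 ≤ q)
    (f : X → ℝ) (hf : Measurable f) (hfnn : ∀ x, 0 ≤ f x)
    (W : ℝ≥0∞) (hWtop : W ≠ ∞)
    (hbound : ∀ t : ℝ, 0 < t → μ {x | t < f x} ≤ (W / ENNReal.ofReal t) ^ q)
    (E : Set X) (hE : MeasurableSet E) (hEfin : μ E ≠ ∞) :
    ∫⁻ x in E, ENNReal.ofReal (f x) ∂μ ≤ 3 * W * μ E ^ (1 - 1/q) := by
  have hq1 : (1:ℝ) < q := by linarith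
  rcases eq_or_ne (μ E) 0 with hE0 | hE0
  · rw [Measure.restrict_eq_zero.mpr hE0, lintegral_zero_measure]
    exact zero_le
  rcases eq_or_ne W 0 with hW0 | hW0
  · have hzero : ∀ t ∈ Ioi (0:ℝ), μ {x | t < f x} = (fun _ => (0:ℝ≥0∞)) t := by
      intro t ht
      refine le_antisymm ?_ (zero_le)
      calc μ {x | t < f x} ≤ (W / ENNReal.ofReal t) ^ q := hbound t ht
        _ = 0 := by
            rw [hW0, ENNReal.zero_div, ENNReal.zero_rpow_of_pos (by linarith)]
    have hz : ∫⁻ x, ENNReal.ofReal (f x) ∂μ = 0 := by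
      rw [lintegral_eq_lintegral_meas_lt μ (Filter.Eventually.of_forall hfnn) hf.aemeasurable,
        setLIntegral_congr_fun measurableSet_Ioi hzero]
      simp
    calc ∫⁻ x in E, ENNReal.ofReal (f x) ∂μ ≤ ∫⁻ x, ENNReal.ofReal (f x) ∂μ :=
          lintegral_mono' Measure.restrict_le_self le_rfl
      _ = 0 := hz
      _ ≤ _ := zero_le
  -- main case
  have hA : 0 < (μ E).toReal := ENNReal.toReal_pos hE0 hEfin
  have hw : 0 < W.toReal := ENNReal.toReal_pos hW0 hWtop
  set A : ℝ := (μ E).toReal with hAdef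
  set w : ℝ := W.toReal with hwdef
  have hAe : μ E = ENNReal.ofReal A := (ENNReal.ofReal_toReal hEfin).symm
  have hWe : W = ENNReal.ofReal w := (ENNReal.ofReal_toReal hWtop).symm
  set t₀ : ℝ := w * A ^ (-(1/q)) with ht₀def
  have ht₀ : 0 < t₀ := by positivity
  have h1 : ∫⁻ x in E, ENNReal.ofReal (f x) ∂μ
      = ∫⁻ t in Ioi (0:ℝ), (μ.restrict E) {x | t < f x} :=
    lintegral_eq_lintegral_meas_lt (μ.restrict E) (Filter.Eventually.of_forall hfnn)
      hf.aemeasurable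
  have hsplit : ∫⁻ t in Ioi (0:ℝ), (μ.restrict E) {x | t < f x}
      = (∫⁻ t in Ioc (0:ℝ) t₀, (μ.restrict E) {x | t < f x})
        + ∫⁻ t in Ioi t₀, (μ.restrict E) {x | t < f x} := by
    rw [← Ioc_union_Ioi_eq_Ioi ht₀.le]
    exact lintegral_union measurableSet_Ioi (Ioc_disjoint_Ioi le_rfl)
  -- first piece
  have hpiece1 : (∫⁻ t in Ioc (0:ℝ) t₀, (μ.restrict E) {x | t < f x})
      ≤ W * μ E ^ (1 - 1/q) := by
    have hb : (∫⁻ t in Ioc (0:ℝ) t₀, (μ.restrict E) {x | t < f x})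
        ≤ ∫⁻ _ in Ioc (0:ℝ) t₀, μ E := by
      refine setLIntegral_mono measurable_const fun t _ => ?_
      calc (μ.restrict E) {x | t < f x} ≤ (μ.restrict E) univ := measure_mono (subset_univ _)
        _ = μ E := by rw [Measure.restrict_apply_univ]
    refine hb.trans ?_
    rw [setLIntegral_const, Real.volume_Ioc, sub_zero]
    have hexp : A ^ (1 - 1/q) = A ^ (1:ℝ) * A ^ (-(1/q)) := by
      rw [← Real.rpow_add hA]; congr 1
    calc μ E * ENNReal.ofReal t₀ = ENNReal.ofReal (A * t₀) := by
          rw [hAe, ← ENNReal.ofReal_mul hA.le]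
      _ = ENNReal.ofReal (w * A ^ (1 - 1/q)) := by
          congr 1
          rw [ht₀def, hexp, Real.rpow_one]; ring
      _ = ENNReal.ofReal w * ENNReal.ofReal (A ^ (1 - 1/q)) := ENNReal.ofReal_mul hw.le
      _ = W * μ E ^ (1 - 1/q) := by
          rw [← hWe, hAe, ENNReal.ofReal_rpow_of_pos hA]
      _ ≤ W * μ E ^ (1 - 1/q) := le_rfl
  -- second piece
  have hmeasr : Measurable fun t : ℝ => t ^ (-q) := measurable_rpow_neg_const q
  have hmeasf : Measurable fun t : ℝ => ENNReal.ofReal (t ^ (-q)) :=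
    ENNReal.measurable_ofReal.comp hmeasr
  have hmeas2 : Measurable fun t : ℝ => W ^ q * ENNReal.ofReal (t ^ (-q)) :=
    measurable_const.mul hmeasf
  have hpiece2 : (∫⁻ t in Ioi t₀, (μ.restrict E) {x | t < f x})
      ≤ 2 * (W * μ E ^ (1 - 1/q)) := by
    have hmono : (∫⁻ t in Ioi t₀, (μ.restrict E) {x | t < f x})
        ≤ ∫⁻ t in Ioi t₀, W ^ q * ENNReal.ofReal (t ^ (-q)) := by
      refine setLIntegral_mono hmeas2 fun t ht => ?_
      have htpos : (0:ℝ) < t := ht₀.trans ht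
      calc (μ.restrict E) {x | t < f x} ≤ μ {x | t < f x} :=
            Measure.le_iff'.1 Measure.restrict_le_self _
        _ ≤ (W / ENNReal.ofReal t) ^ q := hbound t htpos
        _ = W ^ q * ENNReal.ofReal (t ^ (-q)) := by
            rw [ENNReal.div_rpow_of_nonneg _ _ (by linarith : (0:ℝ) ≤ q),
              ENNReal.ofReal_rpow_of_pos htpos, Real.rpow_neg htpos.le,
              ENNReal.ofReal_inv_of_pos (Real.rpow_pos_of_pos htpos q), div_eq_mul_inv]
    refine hmono.trans ?_
    have hint : IntegrableOn (fun t : ℝ => t ^ (-q)) (Ioi t₀) volume :=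
      integrableOn_Ioi_rpow_of_lt (by linarith) ht₀
    have hnn : 0 ≤ᵐ[volume.restrict (Ioi t₀)] fun t : ℝ => t ^ (-q) :=
      (ae_restrict_iff' measurableSet_Ioi).mpr
        (Filter.Eventually.of_forall fun t ht => Real.rpow_nonneg (ht₀.trans ht).le _)
    rw [lintegral_const_mul _ hmeasf,
      ← ofReal_integral_eq_lintegral_ofReal hint hnn,
      integral_Ioi_rpow_of_lt (by linarith) ht₀]
    have hval : -t₀ ^ (-q + 1) / (-q + 1) = t₀ ^ (1-q) * (q-1)⁻¹ := by
      rw [show (-q + 1 : ℝ) = 1 - q by ring, div_eq_mul_inv,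
        show ((1:ℝ)-q)⁻¹ = -(q-1)⁻¹ by rw [show (1:ℝ)-q = -(q-1) by ring, inv_neg]]
      ring
    rw [hval]
    have ht₀exp : t₀ ^ (1-q) = w ^ (1-q) * A ^ (1 - 1/q) := by
      rw [ht₀def, Real.mul_rpow hw.le (Real.rpow_nonneg hA.le _), ← Real.rpow_mul hA.le]
      congr 1
      field_simp
      congr 1; ring
    rw [ht₀exp]
    have hsplit1 : ENNReal.ofReal (w ^ (1-q) * A ^ (1 - 1/q) * (q-1)⁻¹)
        = ENNReal.ofReal (w ^ (1-q)) * ENNReal.ofReal (A ^ (1 - 1/q))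
          * ENNReal.ofReal ((q-1)⁻¹) := by
      rw [ENNReal.ofReal_mul (by positivity), ENNReal.ofReal_mul (by positivity)]
    rw [hsplit1]
    have hWq : W ^ q * ENNReal.ofReal (w ^ (1-q)) = W := by
      rw [hWe, ← ENNReal.ofReal_rpow_of_pos hw, ← hWe, ← ENNReal.rpow_add _ _ hW0 hWtop]
      norm_num
    have hinvle : ENNReal.ofReal ((q-1)⁻¹) ≤ 2 := by
      have h2 : (q-1)⁻¹ ≤ 2 := by
        rw [inv_le_comm₀ (by linarith) (by norm_num)]
        linarith
      calc ENNReal.ofReal ((q-1)⁻¹) ≤ ENNReal.ofReal 2 := ENNReal.ofReal_le_ofReal h2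
        _ = 2 := ENNReal.ofReal_ofNat 2
    calc W ^ q * (ENNReal.ofReal (w ^ (1-q)) * ENNReal.ofReal (A ^ (1 - 1/q))
          * ENNReal.ofReal ((q-1)⁻¹))
        = (W ^ q * ENNReal.ofReal (w ^ (1-q))) * ENNReal.ofReal (A ^ (1 - 1/q))
          * ENNReal.ofReal ((q-1)⁻¹) := by ring
      _ = W * μ E ^ (1 - 1/q) * ENNReal.ofReal ((q-1)⁻¹) := by
          rw [hWq, hAe, ENNReal.ofReal_rpow_of_pos hA]
      _ ≤ W * μ E ^ (1 - 1/q) * 2 := by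
          exact mul_le_mul_right hinvle _
      _ = 2 * (W * μ E ^ (1 - 1/q)) := by ring
  calc ∫⁻ x in E, ENNReal.ofReal (f x) ∂μ
      = (∫⁻ t in Ioc (0:ℝ) t₀, (μ.restrict E) {x | t < f x})
        + ∫⁻ t in Ioi t₀, (μ.restrict E) {x | t < f x} := by rw [h1, hsplit]
    _ ≤ W * μ E ^ (1 - 1/q) + 2 * (W * μ E ^ (1 - 1/q)) := add_le_add hpiece1 hpiece2
    _ = 3 * W * μ E ^ (1 - 1/q) := by ring

lemma lemB (n : ℕ) (hn : 3 ≤ n) :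
    ∃ K : ℝ≥0∞, K ≠ ∞ ∧ ∀ u : EuclideanSpace ℝ (Fin n) → ℂ, ContDiff ℝ (⊤ : ℕ∞) u →
      HasCompactSupport u → ∀ m : ℝ, 0 < m →
      ENNReal.ofReal (m^2) * volume {x | 2*m < ‖u x‖} ^ (1 - 2/(n:ℝ))
        ≤ K * ∫⁻ x in {x | m < ‖u x‖ ∧ ‖u x‖ ≤ 2*m}, ENNReal.ofReal (gradSq u x) := by
  obtain ⟨L, hL1, hL⟩ := psi_deriv_bound
  set CS : ℝ≥0 :=
    eLpNormLESNormFDerivOfEqInnerConst (volume : Measure (EuclideanSpace ℝ (Fin n))) 2 with hCS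
  refine ⟨(CS : ℝ≥0∞) ^ (2:ℝ) * ENNReal.ofReal (16 * L^2), ?_, ?_⟩
  · exact ENNReal.mul_ne_top (ENNReal.rpow_ne_top_of_nonneg (by norm_num) coe_ne_top)
      ofReal_ne_top
  intro u hu hsupp m hm
  have hu1 : ContDiff ℝ 1 u := hu.of_le (by simp)
  have hn2 : (2:ℝ) < n := by exact_mod_cast (by omega : 2 < n)
  have hnpos : (0:ℝ) < n := by linarith
  -- the truncation
  set v : EuclideanSpace ℝ (Fin n) → ℝ := fun x => m * psi (‖u x‖^2 / m^2) with hvdef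
  have hgcd : ContDiff ℝ 1 (fun x : EuclideanSpace ℝ (Fin n) => ‖u x‖^2) := ContDiff.norm_sq ℝ hu1
  have hvcd : ContDiff ℝ 1 v :=
    contDiff_const.mul (psi_contDiff.comp (hgcd.div_const _))
  have hvsupp : HasCompactSupport v := by
    refine hsupp.mono ?_
    intro x hx
    simp only [Function.mem_support] at hx ⊢
    intro hux
    apply hx
    rw [hvdef]
    simp only [hux, norm_zero]
    rw [show (0:ℝ)^2/m^2 = 0 by ring, psi_eq_zero (by norm_num)]
    ring
  -- pointwise derivative formula
  have hder : ∀ x : EuclideanSpace ℝ (Fin n), HasFDerivAt v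
      ((m * deriv psi (‖u x‖^2 / m^2) * (m^2)⁻¹ * 2) •
        ((innerSL ℝ) (u x)).comp (fderiv ℝ u x)) x := by
    intro x
    have hux : HasFDerivAt u (fderiv ℝ u x) x :=
      (hu1.differentiable one_ne_zero x).hasFDerivAt
    have hgx : HasFDerivAt (fun x : EuclideanSpace ℝ (Fin n) => ‖u x‖^2)
        (2 • ((innerSL ℝ) (u x)).comp (fderiv ℝ u x)) x := hux.norm_sq
    have hsx : HasFDerivAt (fun x : EuclideanSpace ℝ (Fin n) => ‖u x‖^2 / m^2)
        ((m^2)⁻¹ • (2 • ((innerSL ℝ) (u x)).comp (fderiv ℝ u x))) x := by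
      exact (hgx.const_smul ((m^2)⁻¹ : ℝ)).congr_of_eventuallyEq
        (Filter.Eventually.of_forall fun y => by simp [div_eq_inv_mul])
    have hpsix : HasDerivAt psi (deriv psi (‖u x‖^2 / m^2)) (‖u x‖^2 / m^2) :=
      (psi_contDiff.differentiable one_ne_zero _).hasDerivAt
    have hcomp := hpsix.comp_hasFDerivAt x hsx
    have h5 := hcomp.const_mul m
    have h6 : (2:ℕ) • ((innerSL ℝ) (u x)).comp (fderiv ℝ u x)
        = (2:ℝ) • ((innerSL ℝ) (u x)).comp (fderiv ℝ u x) :=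
      (Nat.cast_smul_eq_nsmul ℝ 2 _).symm
    rw [h6] at h5
    simpa [smul_smul, mul_comm, mul_assoc, mul_left_comm] using h5
  -- sets
  set A : Set (EuclideanSpace ℝ (Fin n)) := {x | m < ‖u x‖ ∧ ‖u x‖ ≤ 2*m} with hAdef
  set B : Set (EuclideanSpace ℝ (Fin n)) := {x | 2*m < ‖u x‖} with hBdef
  have hnormmeas : Measurable fun x => ‖u x‖ := hu1.continuous.norm.measurable
  have hAmeas : MeasurableSet A := by
    have : A = {x | m < ‖u x‖} ∩ {x | ‖u x‖ ≤ 2*m} := rfl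
    rw [this]
    exact (measurableSet_lt measurable_const hnormmeas).inter
      (measurableSet_le hnormmeas measurable_const)
  have hBmeas : MeasurableSet B := measurableSet_lt measurable_const hnormmeas
  -- gradSq continuity
  have hgrad_cont : Continuous (gradSq u) := by
    refine continuous_finset_sum _ fun i _ => ?_
    exact (((ContinuousLinearMap.apply ℝ ℂ
      (EuclideanSpace.single i (1:ℝ))).continuous.comp
        (hu1.continuous_fderiv one_ne_zero)).norm).pow 2
  -- pointwise bound on the derivative of v
  have key : ∀ x, ((‖fderiv ℝ v x‖₊ : ℝ≥0∞)) ^ (2:ℝ)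
      ≤ A.indicator (fun x => ENNReal.ofReal (16*L^2 * gradSq u x)) x := by
    intro x
    by_cases hx : x ∈ A
    · have hx1 : m < ‖u x‖ := hx.1
      have hx2 : ‖u x‖ ≤ 2*m := hx.2
      have hDu2 : ‖fderiv ℝ u x‖^2 ≤ gradSq u x := opnorm_sq_le n (fderiv ℝ u x)
      have hDu : (0:ℝ) ≤ ‖fderiv ℝ u x‖ := norm_nonneg _
      have hnorm : ‖fderiv ℝ v x‖ ≤ 4*L*‖fderiv ℝ u x‖ := by
        rw [(hder x).fderiv, norm_smul, Real.norm_eq_abs]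
        have hT : ‖((innerSL ℝ) (u x)).comp (fderiv ℝ u x)‖ ≤ ‖u x‖ * ‖fderiv ℝ u x‖ := by
          refine (ContinuousLinearMap.opNorm_comp_le _ _).trans ?_
          rw [innerSL_apply_norm]
        have hc : |m * deriv psi (‖u x‖^2 / m^2) * (m^2)⁻¹ * 2| ≤ m * L * (m^2)⁻¹ * 2 := by
          rw [abs_mul, abs_mul, abs_mul, abs_of_pos hm, abs_of_pos (show (0:ℝ) < (m^2)⁻¹ by positivity)]
          have : |deriv psi (‖u x‖^2 / m^2)| ≤ L := hL _
          have h2 : |(2:ℝ)| = 2 := by norm_num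
          rw [h2]
          gcongr
        calc |m * deriv psi (‖u x‖^2 / m^2) * (m^2)⁻¹ * 2|
              * ‖((innerSL ℝ) (u x)).comp (fderiv ℝ u x)‖
            ≤ (m * L * (m^2)⁻¹ * 2) * (‖u x‖ * ‖fderiv ℝ u x‖) := by
              refine mul_le_mul hc hT (norm_nonneg _) (by positivity)
          _ ≤ (m * L * (m^2)⁻¹ * 2) * ((2*m) * ‖fderiv ℝ u x‖) := by
              refine mul_le_mul_of_nonneg_left ?_ (by positivity)
              exact mul_le_mul_of_nonneg_right hx2 hDu
          _ = 4*L*‖fderiv ℝ u x‖ := by field_simp; ring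
      rw [Set.indicator_of_mem hx]
      calc ((‖fderiv ℝ v x‖₊ : ℝ≥0∞)) ^ (2:ℝ)
          = ENNReal.ofReal (‖fderiv ℝ v x‖^2) := by
            rw [show ((‖fderiv ℝ v x‖₊ : ℝ≥0∞)) = ENNReal.ofReal ‖fderiv ℝ v x‖ from (ofReal_norm _).symm,
              show ((2:ℝ)) = ((2:ℕ):ℝ) by norm_num, ENNReal.rpow_natCast,
              ENNReal.ofReal_pow (norm_nonneg _)]
        _ ≤ ENNReal.ofReal (16*L^2 * gradSq u x) := by
            refine ENNReal.ofReal_le_ofReal ?_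
            calc ‖fderiv ℝ v x‖^2 ≤ (4*L*‖fderiv ℝ u x‖)^2 := by
                  exact pow_le_pow_left₀ (norm_nonneg _) hnorm 2
              _ = 16*L^2 * ‖fderiv ℝ u x‖^2 := by ring
              _ ≤ 16*L^2 * gradSq u x := by
                  refine mul_le_mul_of_nonneg_left hDu2 (by positivity)
    · have hz : fderiv ℝ v x = 0 := by
        rw [(hder x).fderiv]
        have : deriv psi (‖u x‖^2 / m^2) = 0 := by
          rw [hAdef] at hx
          simp only [mem_setOf_eq, not_and_or, not_lt, not_le] at hx
          rcases hx with h | h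
          · refine deriv_psi_eq_zero_of_le ?_
            rw [div_le_one (by positivity)]
            calc ‖u x‖^2 ≤ m^2 := by
                  exact pow_le_pow_left₀ (norm_nonneg _) h 2
              _ ≤ m^2*1 := by ring_nf; exact le_rfl
              _ = m^2 := by ring
          · refine deriv_psi_eq_zero_of_ge ?_
            rw [le_div_iff₀ (by positivity)]
            calc 4 * m^2 = (2*m)^2 := by ring
              _ ≤ ‖u x‖^2 := by
                  exact pow_le_pow_left₀ (by positivity) h.le 2
        rw [this]
        simp
      rw [hz]
      simp only [nnnorm_zero, ENNReal.coe_zero]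
      rw [ENNReal.zero_rpow_of_pos (by norm_num)]
      exact zero_le
  -- the exponent p'
  set p' : ℝ≥0 := (2*(n:ℝ≥0))/((n:ℝ≥0)-2) with hp'def
  have hcoesub : (((n:ℝ≥0)-2 : ℝ≥0) : ℝ) = (n:ℝ) - 2 := by
    rw [NNReal.coe_sub (by exact_mod_cast (by omega : 2 ≤ n))]
    norm_num
  have hp'R : (p' : ℝ) = 2*(n:ℝ)/((n:ℝ)-2) := by
    rw [hp'def, NNReal.coe_div, NNReal.coe_mul, hcoesub]
    norm_num
  have h2n : (0:ℝ) < (n:ℝ) - 2 := by linarith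
  have hp'pos : (0:ℝ) < (p' : ℝ) := by rw [hp'R]; positivity
  have hp'0 : p' ≠ 0 := by
    intro h
    rw [h] at hp'pos
    simp at hp'pos
  have hp'inv : ((p':ℝ))⁻¹ = (((2:ℝ≥0)):ℝ)⁻¹
      - ((Module.finrank ℝ (EuclideanSpace ℝ (Fin n)) : ℝ))⁻¹ := by
    rw [finrank_euclideanSpace_fin, hp'R]
    push_cast
    field_simp
  -- Sobolev inequality
  have hSob : eLpNorm v p' volume ≤ (CS : ℝ≥0∞) * eLpNorm (fderiv ℝ v) ((2:ℝ≥0) : ℝ≥0∞) volume := by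
    refine eLpNorm_le_eLpNorm_fderiv_of_eq_inner (p := 2) (p' := p') volume hvcd hvsupp
      (by norm_num) ?_ ?_
    · rw [finrank_euclideanSpace_fin]; omega
    · exact_mod_cast hp'inv
  -- lower bound for eLpNorm v p'
  have hvB : ∀ x ∈ B, ((‖v x‖₊ : ℝ≥0∞)) ^ ((p':ℝ)) = (ENNReal.ofReal m) ^ ((p':ℝ)) := by
    intro x hx
    have hxB : 2*m < ‖u x‖ := hx
    have h4 : (4:ℝ) ≤ ‖u x‖^2 / m^2 := by
      rw [le_div_iff₀ (by positivity)]
      calc (4:ℝ) * m^2 = (2*m)^2 := by ring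
        _ ≤ ‖u x‖^2 := pow_le_pow_left₀ (by positivity) hxB.le 2
    have hv : v x = m := by
      rw [hvdef]
      simp only
      rw [psi_eq_one h4]
      ring
    rw [hv, ← Real.enorm_eq_ofReal hm.le]; rfl
  have hlow : ENNReal.ofReal m * volume B ^ (1/(p':ℝ)) ≤ eLpNorm v p' volume := by
    rw [eLpNorm_nnreal_eq_lintegral hp'0]
    have hstep : (ENNReal.ofReal m) ^ ((p':ℝ)) * volume B
        ≤ ∫⁻ x, ((‖v x‖₊ : ℝ≥0∞)) ^ ((p':ℝ)) := by
      calc (ENNReal.ofReal m) ^ ((p':ℝ)) * volume B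
          = ∫⁻ _ in B, (ENNReal.ofReal m) ^ ((p':ℝ)) := (setLIntegral_const _ _).symm
        _ = ∫⁻ x in B, ((‖v x‖₊ : ℝ≥0∞)) ^ ((p':ℝ)) :=
            setLIntegral_congr_fun hBmeas
              (fun x hx => (hvB x hx).symm)
        _ ≤ ∫⁻ x, ((‖v x‖₊ : ℝ≥0∞)) ^ ((p':ℝ)) :=
            lintegral_mono' Measure.restrict_le_self le_rfl
    calc ENNReal.ofReal m * volume B ^ (1/(p':ℝ))
        = ((ENNReal.ofReal m) ^ ((p':ℝ)) * volume B) ^ (1/(p':ℝ)) := by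
          rw [ENNReal.mul_rpow_of_nonneg _ _ (by positivity), ← ENNReal.rpow_mul,
            mul_one_div_cancel hp'pos.ne', ENNReal.rpow_one]
      _ ≤ (∫⁻ x, ((‖v x‖₊ : ℝ≥0∞)) ^ ((p':ℝ))) ^ (1/(p':ℝ)) :=
          ENNReal.rpow_le_rpow hstep (by positivity)
  -- upper bound for the derivative term
  have hgmeas : Measurable fun x => ENNReal.ofReal (gradSq u x) :=
    ENNReal.measurable_ofReal.comp hgrad_cont.measurable
  have hup : (∫⁻ x, ((‖fderiv ℝ v x‖₊ : ℝ≥0∞)) ^ (2:ℝ))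
      ≤ ENNReal.ofReal (16*L^2) * ∫⁻ x in A, ENNReal.ofReal (gradSq u x) := by
    calc (∫⁻ x, ((‖fderiv ℝ v x‖₊ : ℝ≥0∞)) ^ (2:ℝ))
        ≤ ∫⁻ x, A.indicator (fun x => ENNReal.ofReal (16*L^2 * gradSq u x)) x :=
          lintegral_mono key
      _ = ∫⁻ x in A, ENNReal.ofReal (16*L^2 * gradSq u x) := lintegral_indicator hAmeas _
      _ = ∫⁻ x in A, ENNReal.ofReal (16*L^2) * ENNReal.ofReal (gradSq u x) := by
          refine setLIntegral_congr_fun hAmeas (fun x _ => ?_)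
          rw [ENNReal.ofReal_mul (by positivity)]
      _ = ENNReal.ofReal (16*L^2) * ∫⁻ x in A, ENNReal.ofReal (gradSq u x) :=
          lintegral_const_mul _ hgmeas
  have h2c : eLpNorm (fderiv ℝ v) ((2:ℝ≥0) : ℝ≥0∞) volume
      = (∫⁻ x, ((‖fderiv ℝ v x‖₊ : ℝ≥0∞)) ^ (2:ℝ)) ^ (1/(2:ℝ)) := by
    rw [eLpNorm_nnreal_eq_lintegral two_ne_zero]
    norm_num
    rfl
  have hexp2 : (1/(p':ℝ)) * 2 = 1 - 2/(n:ℝ) := by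
    rw [hp'R]
    field_simp
  calc ENNReal.ofReal (m^2) * volume B ^ (1 - 2/(n:ℝ))
      = (ENNReal.ofReal m * volume B ^ (1/(p':ℝ))) ^ (2:ℝ) := by
        rw [ENNReal.mul_rpow_of_nonneg _ _ (by norm_num), ← ENNReal.rpow_mul, hexp2]
        congr 1
        rw [show ((2:ℝ)) = ((2:ℕ):ℝ) by norm_num, ENNReal.rpow_natCast,
          ENNReal.ofReal_pow hm.le]
    _ ≤ (eLpNorm v p' volume) ^ (2:ℝ) := ENNReal.rpow_le_rpow hlow (by norm_num)
    _ ≤ ((CS : ℝ≥0∞) * eLpNorm (fderiv ℝ v) ((2:ℝ≥0) : ℝ≥0∞) volume) ^ (2:ℝ) :=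
        ENNReal.rpow_le_rpow hSob (by norm_num)
    _ = (CS : ℝ≥0∞) ^ (2:ℝ) * (eLpNorm (fderiv ℝ v) ((2:ℝ≥0) : ℝ≥0∞) volume) ^ (2:ℝ) :=
        ENNReal.mul_rpow_of_nonneg _ _ (by norm_num)
    _ ≤ (CS : ℝ≥0∞) ^ (2:ℝ) *
        (ENNReal.ofReal (16*L^2) * ∫⁻ x in A, ENNReal.ofReal (gradSq u x)) := by
        refine mul_le_mul_right ?_ _
        rw [h2c, ← ENNReal.rpow_mul]
        rw [show (1/(2:ℝ)) * 2 = 1 by norm_num, ENNReal.rpow_one]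
        exact hup
    _ = (CS : ℝ≥0∞) ^ (2:ℝ) * ENNReal.ofReal (16*L^2)
        * ∫⁻ x in A, ENNReal.ofReal (gradSq u x) := by rw [mul_assoc]

lemma exists_dyadic {t : ℝ} (ht : 0 < t) :
    ∃ k : ℤ, (2:ℝ)^k < t ∧ t ≤ (2:ℝ)^(k+1) := by
  set L := Real.logb 2 t with hL
  refine ⟨⌈L⌉ - 1, ?_, ?_⟩
  · have h1 : ((⌈L⌉:ℝ) - 1) < L := by linarith [Int.ceil_lt_add_one L]
    calc (2:ℝ)^(⌈L⌉-1) = (2:ℝ) ^ (((⌈L⌉-1 : ℤ)):ℝ) := (Real.rpow_intCast 2 _).symm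
      _ < (2:ℝ) ^ L := by
          refine (Real.rpow_lt_rpow_left_iff (by norm_num)).mpr ?_
          push_cast
          linarith
      _ = t := Real.rpow_logb (by norm_num) (by norm_num) ht
  · have h2 : L ≤ ((⌈L⌉:ℝ) - 1) + 1 := by linarith [Int.le_ceil L]
    calc t = (2:ℝ) ^ L := (Real.rpow_logb (by norm_num) (by norm_num) ht).symm
      _ ≤ (2:ℝ) ^ ((((⌈L⌉ - 1 : ℤ) + 1 : ℤ)):ℝ) := by
          refine (Real.rpow_le_rpow_left_iff (by norm_num)).mpr ?_
          push_cast
          linarith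
      _ = (2:ℝ) ^ ((⌈L⌉ - 1) + 1) := Real.rpow_intCast 2 _


end AuxiliaryLemmas

theorem statement_19 (n : ℕ) (hn : 3 ≤ n) :
    ∃ C : ℝ, 0 < C ∧ ∀ V : EuclideanSpace ℝ (Fin n) → ℂ, Measurable V →
      eLorentz (volume : Measure (EuclideanSpace ℝ (Fin n))) ((n : ℝ) / 2) ∞
          (fun x => ENNReal.ofReal ‖V x‖) < ∞ →
      ∀ u : EuclideanSpace ℝ (Fin n) → ℂ, ContDiff ℝ (⊤ : ℕ∞) u → HasCompactSupport u →
        (∫⁻ x : EuclideanSpace ℝ (Fin n), ENNReal.ofReal (‖V x‖ * ‖u x‖ ^ 2)) ≤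
          ENNReal.ofReal C *
            eLorentz (volume : Measure (EuclideanSpace ℝ (Fin n))) ((n : ℝ) / 2) ∞
              (fun x => ENNReal.ofReal ‖V x‖) *
            ∫⁻ x : EuclideanSpace ℝ (Fin n), ENNReal.ofReal (gradSq u x) := by
  obtain ⟨K, hKtop, hK⟩ := lemB n hn
  refine ⟨48 * K.toReal + 1, by positivity, ?_⟩
  intro V hV hVW u hu hsupp
  have hn2 : (2:ℝ) < (n:ℝ) := by exact_mod_cast (by omega : 2 < n)
  set q : ℝ := (n:ℝ)/2 with hq
  have h3n : (3:ℝ) ≤ (n:ℝ) := by exact_mod_cast hn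
  have hq32 : 3/2 ≤ q := by rw [hq]; linarith
  set W : ℝ≥0∞ := eLorentz (volume : Measure (EuclideanSpace ℝ (Fin n))) ((n : ℝ) / 2) ∞
      (fun x => ENNReal.ofReal ‖V x‖) with hWdef
  have hWtop : W ≠ ∞ := hVW.ne
  have hucont : Continuous u := hu.continuous
  have hnormmeas : Measurable fun x => ‖u x‖ := hucont.norm.measurable
  -- superlevel-set bound from the weak norm
  have hVbound : ∀ t : ℝ, 0 < t →
      volume {x | t < ‖V x‖} ≤ (W / ENNReal.ofReal t) ^ q := by
    intro t ht
    have hset : {x : EuclideanSpace ℝ (Fin n) | ENNReal.ofReal t < ENNReal.ofReal ‖V x‖}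
        = {x | t < ‖V x‖} := by
      ext x
      exact ENNReal.ofReal_lt_ofReal_iff_of_nonneg ht.le
    have hsup : ENNReal.ofReal t * volume {x | t < ‖V x‖} ^ (1/q) ≤ W := by
      rw [hWdef, eLorentz, if_pos rfl]
      rw [← hset]
      exact le_iSup₂ (f := fun (α : ℝ) (_ : 0 < α) => ENNReal.ofReal α *
        volume {x | ENNReal.ofReal α < ENNReal.ofReal ‖V x‖} ^ (1 / ((n:ℝ)/2))) t ht
    have h0 : ENNReal.ofReal t ≠ 0 := by
      simp [ENNReal.ofReal_eq_zero]; linarith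
    have hdiv : volume {x | t < ‖V x‖} ^ (1/q) ≤ W / ENNReal.ofReal t :=
      (ENNReal.le_div_iff_mul_le (Or.inl h0) (Or.inl ENNReal.ofReal_ne_top)).mpr
        (by rwa [mul_comm])
    have hqne : q ≠ 0 := by positivity
    calc volume {x | t < ‖V x‖} = (volume {x | t < ‖V x‖} ^ (1/q)) ^ q := by
          rw [← ENNReal.rpow_mul, one_div_mul_cancel hqne, ENNReal.rpow_one]
      _ ≤ (W / ENNReal.ofReal t) ^ q := ENNReal.rpow_le_rpow hdiv (by positivity)
  -- dyadic decomposition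
  set A : ℤ → Set (EuclideanSpace ℝ (Fin n)) :=
    fun k => {x | (2:ℝ)^k < ‖u x‖ ∧ ‖u x‖ ≤ (2:ℝ)^(k+1)} with hAdef
  set D : ℤ → Set (EuclideanSpace ℝ (Fin n)) :=
    fun k => {x | (2:ℝ)^(k-1) < ‖u x‖ ∧ ‖u x‖ ≤ 2*(2:ℝ)^(k-1)} with hDdef
  have hAmeas : ∀ k, MeasurableSet (A k) := fun k =>
    (measurableSet_lt measurable_const hnormmeas).inter
      (measurableSet_le hnormmeas measurable_const)
  have hDmeas : ∀ k, MeasurableSet (D k) := fun k =>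
    (measurableSet_lt measurable_const hnormmeas).inter
      (measurableSet_le hnormmeas measurable_const)
  have hAdisj : Pairwise (Function.onFun Disjoint A) := by
    intro k l hkl
    rcases lt_or_gt_of_ne hkl with h | h
    · refine Set.disjoint_left.mpr fun x hxk hxl => ?_
      have h1 : ‖u x‖ ≤ (2:ℝ)^(k+1) := hxk.2
      have h2 : (2:ℝ)^l < ‖u x‖ := hxl.1
      have h3 : (2:ℝ)^(k+1) ≤ (2:ℝ)^l := zpow_le_zpow_right₀ (by norm_num) (by omega)
      linarith
    · refine Set.disjoint_left.mpr fun x hxk hxl => ?_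
      have h1 : ‖u x‖ ≤ (2:ℝ)^(l+1) := hxl.2
      have h2 : (2:ℝ)^k < ‖u x‖ := hxk.1
      have h3 : (2:ℝ)^(l+1) ≤ (2:ℝ)^k := zpow_le_zpow_right₀ (by norm_num) (by omega)
      linarith
  have hDdisj : Pairwise (Function.onFun Disjoint D) := by
    have hDA : ∀ k, D k = A (k-1) := by
      intro k
      rw [hDdef, hAdef]
      simp only
      congr 1
      ext x
      have : (2:ℝ) * (2:ℝ)^(k-1) = (2:ℝ)^(k-1+1) := by
        rw [zpow_add_one₀ (by norm_num : (2:ℝ) ≠ 0)]; ring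
      rw [this]
    intro k l hkl
    rw [Function.onFun, hDA k, hDA l]
    exact hAdisj (by omega)
  -- decomposition of the integral
  have hVnmeas : Measurable fun x => ENNReal.ofReal ‖V x‖ :=
    ENNReal.measurable_ofReal.comp hV.norm
  have hFmeas : Measurable fun x => ENNReal.ofReal (‖V x‖ * ‖u x‖^2) :=
    ENNReal.measurable_ofReal.comp (hV.norm.mul (hnormmeas.pow_const 2))
  set S : Set (EuclideanSpace ℝ (Fin n)) := {x | 0 < ‖u x‖} with hSdef
  have hSmeas : MeasurableSet S := measurableSet_lt measurable_const hnormmeas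
  have hSU : S = ⋃ k, A k := by
    ext x
    simp only [hSdef, hAdef, mem_setOf_eq, mem_iUnion]
    constructor
    · intro hx
      obtain ⟨k, h1, h2⟩ := exists_dyadic hx
      exact ⟨k, h1, h2⟩
    · rintro ⟨k, h1, _⟩
      exact lt_trans (zpow_pos (by norm_num) k) h1
  have hcompl : ∫⁻ x in Sᶜ, ENNReal.ofReal (‖V x‖ * ‖u x‖^2) = 0 := by
    rw [setLIntegral_congr_fun hSmeas.compl (fun x hx =>
      (by
        have h0 : ‖u x‖ = 0 := le_antisymm (not_lt.mp hx) (norm_nonneg _)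
        rw [h0]
        norm_num : ENNReal.ofReal (‖V x‖ * ‖u x‖^2) = (fun _ => (0:ℝ≥0∞)) x))]
    simp
  have hdecomp : (∫⁻ x, ENNReal.ofReal (‖V x‖ * ‖u x‖^2))
      = ∑' k : ℤ, ∫⁻ x in A k, ENNReal.ofReal (‖V x‖ * ‖u x‖^2) := by
    rw [← lintegral_add_compl (fun x => ENNReal.ofReal (‖V x‖ * ‖u x‖^2)) hSmeas, hcompl,
      add_zero, hSU, lintegral_iUnion hAmeas hAdisj]
  -- per-piece estimate
  have hθ : 1 - 1/q = 1 - 2/(n:ℝ) := by rw [hq, one_div_div]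
  have hθ0 : (0:ℝ) ≤ 1 - 2/(n:ℝ) := by
    rw [sub_nonneg, div_le_one (by linarith)]
    linarith
  have hterm : ∀ k : ℤ, (∫⁻ x in A k, ENNReal.ofReal (‖V x‖ * ‖u x‖^2))
      ≤ (48 * K * W) * ∫⁻ x in D k, ENNReal.ofReal (gradSq u x) := by
    intro k
    set m : ℝ := (2:ℝ)^(k-1) with hmdef
    have hm : 0 < m := zpow_pos (by norm_num) _
    have h2m : 2*m = (2:ℝ)^k := by
      rw [hmdef, mul_comm, ← zpow_add_one₀ (by norm_num : (2:ℝ) ≠ 0)]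
      congr 1
      omega
    have hAfin : volume (A k) ≠ ∞ := by
      refine (lt_of_le_of_lt (measure_mono ?_) hsupp.measure_lt_top).ne
      intro x hx
      refine subset_tsupport u ?_
      simp only [Function.mem_support]
      intro h0
      have : ‖u x‖ = 0 := by rw [h0]; simp
      have h1 : (2:ℝ)^k < ‖u x‖ := hx.1
      have h2 : (0:ℝ) < (2:ℝ)^k := zpow_pos (by norm_num) _
      linarith
    have step1 : (∫⁻ x in A k, ENNReal.ofReal (‖V x‖ * ‖u x‖^2))
        ≤ ENNReal.ofReal (((2:ℝ)^(k+1))^2) * ∫⁻ x in A k, ENNReal.ofReal ‖V x‖ := by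
      rw [← lintegral_const_mul _ hVnmeas]
      refine setLIntegral_mono (measurable_const.mul hVnmeas) fun x hx => ?_
      rw [← ENNReal.ofReal_mul (by positivity)]
      refine ENNReal.ofReal_le_ofReal ?_
      rw [mul_comm (((2:ℝ)^(k+1))^2)]
      refine mul_le_mul_of_nonneg_left ?_ (norm_nonneg _)
      exact pow_le_pow_left₀ (norm_nonneg _) hx.2 2
    have step2 : (∫⁻ x in A k, ENNReal.ofReal ‖V x‖)
        ≤ 3 * W * volume (A k) ^ (1 - 2/(n:ℝ)) := by
      rw [← hθ]
      exact lemA volume q hq32 (fun x => ‖V x‖) hV.norm (fun x => norm_nonneg _)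
        W hWtop hVbound (A k) (hAmeas k) hAfin
    have step3 : volume (A k) ^ (1 - 2/(n:ℝ))
        ≤ volume {x | 2*m < ‖u x‖} ^ (1 - 2/(n:ℝ)) := by
      refine ENNReal.rpow_le_rpow (measure_mono fun x hx => ?_) hθ0
      simp only [mem_setOf_eq]
      rw [h2m]
      exact hx.1
    have step4 : ENNReal.ofReal (m^2) * volume {x | 2*m < ‖u x‖} ^ (1 - 2/(n:ℝ))
        ≤ K * ∫⁻ x in D k, ENNReal.ofReal (gradSq u x) := hK u hu hsupp m hm
    have hc16 : ENNReal.ofReal (((2:ℝ)^(k+1))^2) = 16 * ENNReal.ofReal (m^2) := by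
      have h1 : ((2:ℝ)^(k+1))^2 = 16 * m^2 := by
        rw [hmdef, show (k+1 : ℤ) = (k-1) + 2 by omega,
          zpow_add₀ (by norm_num : (2:ℝ) ≠ 0)]
        norm_num
        ring
      rw [h1, ENNReal.ofReal_mul (by norm_num)]
      norm_num
    calc (∫⁻ x in A k, ENNReal.ofReal (‖V x‖ * ‖u x‖^2))
        ≤ ENNReal.ofReal (((2:ℝ)^(k+1))^2) * ∫⁻ x in A k, ENNReal.ofReal ‖V x‖ := step1
      _ ≤ ENNReal.ofReal (((2:ℝ)^(k+1))^2) * (3 * W * volume (A k) ^ (1 - 2/(n:ℝ))) :=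
          mul_le_mul_right step2 _
      _ ≤ 16 * ENNReal.ofReal (m^2) * (3 * W * volume {x | 2*m < ‖u x‖} ^ (1 - 2/(n:ℝ))) := by
          rw [hc16]
          exact mul_le_mul_right (mul_le_mul_right step3 _) _
      _ = 48 * W * (ENNReal.ofReal (m^2) * volume {x | 2*m < ‖u x‖} ^ (1 - 2/(n:ℝ))) := by
          ring
      _ ≤ 48 * W * (K * ∫⁻ x in D k, ENNReal.ofReal (gradSq u x)) :=
          mul_le_mul_right step4 _
      _ = (48 * K * W) * ∫⁻ x in D k, ENNReal.ofReal (gradSq u x) := by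
          ring
  -- summation
  have hsum : (∫⁻ x, ENNReal.ofReal (‖V x‖ * ‖u x‖^2))
      ≤ (48 * K * W) * ∫⁻ x, ENNReal.ofReal (gradSq u x) := by
    rw [hdecomp]
    calc ∑' k : ℤ, ∫⁻ x in A k, ENNReal.ofReal (‖V x‖ * ‖u x‖^2)
        ≤ ∑' k : ℤ, (48 * K * W) * ∫⁻ x in D k, ENNReal.ofReal (gradSq u x) :=
          ENNReal.tsum_le_tsum hterm
      _ = (48 * K * W) * ∑' k : ℤ, ∫⁻ x in D k, ENNReal.ofReal (gradSq u x) :=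
          ENNReal.tsum_mul_left
      _ = (48 * K * W) * ∫⁻ x in ⋃ k, D k, ENNReal.ofReal (gradSq u x) := by
          rw [lintegral_iUnion hDmeas hDdisj]
      _ ≤ (48 * K * W) * ∫⁻ x, ENNReal.ofReal (gradSq u x) :=
          mul_le_mul_right (lintegral_mono' Measure.restrict_le_self le_rfl) _
  refine hsum.trans ?_
  have hCK : 48 * K ≤ ENNReal.ofReal (48 * K.toReal + 1) := by
    calc 48 * K = ENNReal.ofReal 48 * ENNReal.ofReal K.toReal := by
          rw [ENNReal.ofReal_toReal hKtop]
          norm_num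
      _ = ENNReal.ofReal (48 * K.toReal) := by
          rw [← ENNReal.ofReal_mul (by norm_num)]
      _ ≤ ENNReal.ofReal (48 * K.toReal + 1) := ENNReal.ofReal_le_ofReal (by linarith)
  calc (48 * K * W) * ∫⁻ x, ENNReal.ofReal (gradSq u x)
      = (48 * K) * (W * ∫⁻ x, ENNReal.ofReal (gradSq u x)) := by ring
    _ ≤ ENNReal.ofReal (48 * K.toReal + 1) * (W * ∫⁻ x, ENNReal.ofReal (gradSq u x)) :=
        mul_le_mul_left hCK _
    _ = ENNReal.ofReal (48 * K.toReal + 1) * W * ∫⁻ x, ENNReal.ofReal (gradSq u x) := by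
        ring
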